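/- arXiv:2410.16036 — 3 statements merged into one kernel-verified Lean document; each statement's English description precedes it below -/
import Mathlib

section
/- Let B > 0 and p ∈ ℝ. Let v : ℝ → ℝ be locally integrable and suppose there exist a measurable, nonnegative, square-integrable function v₂ : ℝ → ℝ and a constant M ≥ 0 such that v(x) ≥ −v₂(x) − M for almost every x ∈ ℝ. Then for every δ > 0 the window integral ∫_a^{a+δ} ((p + Bx)² + v(x)) dx tends to +∞ as a → +∞, and also tends to +∞ as a → −∞. -/
open MeasureTheory Filter Set

/- Since `v₂ ≤ v₂ ^ 2 + 1`, the hypothesis gives `v ≥ -v₂ ^ 2 - (M + 1)` with `v₂ ^ 2` integrable,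
so the window integrals of `v` are bounded below uniformly in the position of the window. The
window integrals of `(p + B x) ^ 2` tend to `+∞` because the integrand does and the windows
escape to `±∞` with fixed length `δ`. -/

theorem MeasureTheory.LocallyIntegrable.integrableOn_Ioc {X E : Type*} [TopologicalSpace X]
    [Preorder X] [CompactIccSpace X] [MeasurableSpace X] [NormedAddCommGroup E] {μ : Measure X}
    {f : X → E} (hf : LocallyIntegrable f μ) (a b : X) : IntegrableOn f (Ioc a b) μ :=
  (hf.integrableOn_isCompact isCompact_Icc).mono_set Ioc_subset_Icc_self

theorem neg_integral_sub_mul_le_setIntegral {α : Type*} [MeasurableSpace α] {μ : Measure α}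
    {f w : α → ℝ} {s : Set α} {C : ℝ} (hf : IntegrableOn f s μ) (hw : Integrable w μ)
    (hw₀ : 0 ≤ᵐ[μ] w) (hs : μ s ≠ ⊤) (hfw : ∀ᵐ x ∂μ, -w x - C ≤ f x) :
    -(∫ x, w x ∂μ) - C * μ.real s ≤ ∫ x in s, f x ∂μ := calc
  -(∫ x, w x ∂μ) - C * μ.real s ≤ -(∫ x in s, w x ∂μ) - C * μ.real s := by
    linarith [setIntegral_le_integral (s := s) hw hw₀]
  _ = ∫ x in s, (-w x - C) ∂μ := by
    rw [integral_sub (f := fun x => -w x) hw.integrableOn.neg (integrableOn_const hs),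
      integral_neg, setIntegral_const, smul_eq_mul, mul_comm]
  _ ≤ ∫ x in s, f x ∂μ :=
    integral_mono_ae (hw.integrableOn.neg.sub (integrableOn_const hs)) hf (ae_restrict_of_ae hfw)

theorem tendsto_setIntegral_Ioc_add_atTop {q : ℝ → ℝ} {δ : ℝ} {l : Filter ℝ} (hδ : 0 < δ)
    (hq : LocallyIntegrable q) (hwin : Tendsto (fun a => Ioc a (a + δ)) l l.smallSets)
    (hql : Tendsto q l atTop) :
    Tendsto (fun a => ∫ x in Ioc a (a + δ), q x) l atTop := by
  refine tendsto_atTop.2 fun c => ?_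
  filter_upwards [hwin.eventually (hql.eventually_ge_atTop (c / δ)).smallSets] with a ha
  have hvol : volume.real (Ioc a (a + δ)) = δ := by simp [hδ.le]
  calc c = c / δ * volume.real (Ioc a (a + δ)) := by rw [hvol, div_mul_cancel₀ c hδ.ne']
    _ ≤ ∫ x in Ioc a (a + δ), q x :=
      setIntegral_ge_of_const_le_real measurableSet_Ioc measure_Ioc_lt_top.ne ha
        (hq.integrableOn_Ioc a (a + δ))

theorem molchanov_window_tendsto_atTop_general
    (B p : ℝ) (hB : 0 < B) (v v₂ : ℝ → ℝ)
    (hv : LocallyIntegrable v volume)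
    (hv₂L2 : Integrable (fun x => (v₂ x) ^ 2))
    (M : ℝ)
    (hlb : ∀ᵐ x : ℝ, v x ≥ -v₂ x - M) :
    ∀ δ : ℝ, 0 < δ →
      Tendsto (fun a : ℝ => ∫ x in Set.Ioc a (a + δ), ((p + B * x) ^ 2 + v x))
        atTop atTop ∧
      Tendsto (fun a : ℝ => ∫ x in Set.Ioc a (a + δ), ((p + B * x) ^ 2 + v x))
        atBot atTop := by
  intro δ hδ
  have hq : Continuous fun x : ℝ => (p + B * x) ^ 2 := by fun_prop
  have hv_lower (a : ℝ) :
      -(∫ x, v₂ x ^ 2) - (M + 1) * δ ≤ ∫ x in Ioc a (a + δ), v x := by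
    have := neg_integral_sub_mul_le_setIntegral (C := M + 1) (hv.integrableOn_Ioc a (a + δ)) hv₂L2
      (ae_of_all _ fun x => sq_nonneg _) measure_Ioc_lt_top.ne
      (hlb.mono fun x hx => by nlinarith [sq_nonneg (v₂ x - 1)])
    simpa [hδ.le] using this
  have hwindow (l : Filter ℝ) (hwin : Tendsto (fun a => Ioc a (a + δ)) l l.smallSets)
      (hql : Tendsto (fun x => (p + B * x) ^ 2) l atTop) :
      Tendsto (fun a => ∫ x in Ioc a (a + δ), ((p + B * x) ^ 2 + v x)) l atTop := by
    simp_rw [fun a => integral_add (hq.locallyIntegrable.integrableOn_Ioc a (a + δ))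
      (hv.integrableOn_Ioc a (a + δ))]
    exact tendsto_atTop_add_right_of_le _ _
      (tendsto_setIntegral_Ioc_add_atTop hδ hq.locallyIntegrable hwin hql) hv_lower
  have hlin_top : Tendsto (fun x => p + B * x) atTop atTop :=
    tendsto_atTop_add_const_left _ p (tendsto_id.const_mul_atTop hB)
  have hlin_bot : Tendsto (fun x => p + B * x) atBot atBot :=
    tendsto_atBot_add_const_left _ p (tendsto_id.const_mul_atBot hB)
  exact ⟨hwindow atTop (tendsto_id.Ioc (tendsto_atTop_add_const_right _ δ tendsto_id))
      (by simpa only [sq] using hlin_top.atTop_mul_atTop₀ hlin_top),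
    hwindow atBot (tendsto_id.Ioc (tendsto_atBot_add_const_right _ δ tendsto_id))
      (by simpa only [sq] using hlin_bot.atBot_mul_atBot₀ hlin_bot)⟩

/-- Molchanov criterion for the fiber operator: with `B > 0`,
`v` locally integrable and bounded below by `−v₂ − M` a.e. with `v₂ ≥ 0`
square-integrable and `M ≥ 0`, for every `δ > 0` the window integral
`∫_a^{a+δ} ((p+Bx)² + v(x)) dx` tends to `+∞` as `a → +∞` and as `a → −∞`. -/
theorem molchanov_window_tendsto_atTop
    (B p : ℝ) (hB : 0 < B) (v v₂ : ℝ → ℝ)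
    (hv : LocallyIntegrable v volume)
    (hv₂meas : Measurable v₂) (hv₂nonneg : ∀ x, 0 ≤ v₂ x)
    (hv₂L2 : Integrable (fun x => (v₂ x) ^ 2))
    (M : ℝ) (hM : 0 ≤ M)
    (hlb : ∀ᵐ x : ℝ, v x ≥ -v₂ x - M) :
    ∀ δ : ℝ, 0 < δ →
      Tendsto (fun a : ℝ => ∫ x in Set.Ioc a (a + δ), ((p + B * x) ^ 2 + v x))
        atTop atTop ∧
      Tendsto (fun a : ℝ => ∫ x in Set.Ioc a (a + δ), ((p + B * x) ^ 2 + v x))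
        atBot atTop :=
  molchanov_window_tendsto_atTop_general B p hB v v₂ hv hv₂L2 M hlb
end

section
/- Let n ∈ ℕ and set g(x) = (H_n(x))² · e^{−x²}, where H_n is the probabilists' Hermite polynomial. Then the zero set {ξ ∈ ℝ : 𝓕g(ξ) = 0} of the Fourier transform of g has no accumulation point in ℝ; in particular all zeros of 𝓕g are isolated and the zero set has Lebesgue measure zero. -/
open MeasureTheory Polynomial

open scoped FourierTransform

/-!
The function `g = H_n² e^{-x²} ≥ 0` is the density of a measure `μ` with exponential moments of
every order, and `𝓕 g (ξ) = charFun μ (-2πξ)`. Such a characteristic function is the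
restriction of the entire function `z ↦ complexMGF id μ (z I)`, so `𝓕 g` is real-analytic; it
is nonzero since `𝓕 g (0) = ∫ g > 0`. By the identity theorem its zero set is closed and
discrete, hence countable and Lebesgue-null.
-/

open Real ProbabilityTheory Filter Set

theorem integrable_aeval_mul_exp_neg_mul_sq {R : Type*} [CommSemiring R] [Algebra R ℝ] (P : R[X])
    {b : ℝ} (hb : 0 < b) : Integrable fun x : ℝ => aeval x P * rexp (-b * x ^ 2) := by
  induction P using Polynomial.induction_on' with
  | add p q hp hq => simpa [add_mul, Pi.add_def] using hp.add hq
  | monomial k c =>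
    have h := integrable_rpow_mul_exp_neg_mul_sq hb (s := k)
      (neg_one_lt_zero.trans_le k.cast_nonneg)
    simpa [aeval_monomial, mul_assoc, Real.rpow_natCast] using h.const_mul (algebraMap R ℝ c)

theorem integrable_aeval_mul_exp_neg_mul_sq_mul_exp_mul {R : Type*} [CommSemiring R] [Algebra R ℝ]
    (P : R[X]) {b : ℝ} (hb : 0 < b) (t : ℝ) :
    Integrable fun x : ℝ => aeval x P * rexp (-b * x ^ 2) * rexp (t * x) := by
  refine ((integrable_aeval_mul_exp_neg_mul_sq P (half_pos hb)).norm.const_mul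
    (rexp (t ^ 2 / (2 * b)))).mono' (by fun_prop) (Eventually.of_forall fun x => ?_)
  -- AM-GM: `t x ≤ t² / (2b) + b x² / 2`
  have hamgm : -b * x ^ 2 + t * x ≤ t ^ 2 / (2 * b) + -(b / 2) * x ^ 2 := by
    rw [div_add' _ _ _ (by positivity), le_div_iff₀ (by positivity)]
    nlinarith [sq_nonneg (t - b * x)]
  calc ‖aeval x P * rexp (-b * x ^ 2) * rexp (t * x)‖
      = ‖aeval x P‖ * rexp (-b * x ^ 2 + t * x) := by
        rw [mul_assoc, ← Real.exp_add, norm_mul, norm_of_nonneg (exp_pos _).le]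
    _ ≤ ‖aeval x P‖ * rexp (t ^ 2 / (2 * b) + -(b / 2) * x ^ 2) := by gcongr
    _ = _ := by rw [Real.exp_add, norm_mul, norm_of_nonneg (exp_pos _).le]; ring

theorem analyticOnNhd_charFun_of_integrable_exp {μ : Measure ℝ}
    (hμ : ∀ t : ℝ, Integrable (fun x => rexp (t * x)) μ) :
    AnalyticOnNhd ℝ (charFun μ) univ := by
  have hstrip (z : ℂ) : z.re ∈ interior (integrableExpSet id μ) := by
    simp [show integrableExpSet id μ = univ from eq_univ_of_forall hμ]
  have hcomp : charFun μ = complexMGF id μ ∘ fun t : ℝ => (t : ℂ) * Complex.I := by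
    funext t; exact (complexMGF_id_mul_I t).symm
  rw [hcomp]
  exact fun t _ => (analyticAt_complexMGF (hstrip _)).restrictScalars.comp
    ((Complex.ofRealCLM.analyticAt t).mul analyticAt_const)

theorem analyticOnNhd_fourier_ofReal_of_integrable_exp {w : ℝ → ℝ} (hw : 0 ≤ w)
    (hw_int : ∀ t : ℝ, Integrable fun x => w x * rexp (t * x)) :
    AnalyticOnNhd ℝ (𝓕 fun x => (w x : ℂ)) univ := by
  set μ := volume.withDensity fun x => ENNReal.ofReal (w x)
  have hdens : AEMeasurable (fun x => ENNReal.ofReal (w x)) :=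
    (by simpa using (hw_int 0).aemeasurable : AEMeasurable w).ennreal_ofReal
  have hfinite : ∀ᵐ x, ENNReal.ofReal (w x) < ⊤ := ae_of_all _ fun _ => ENNReal.ofReal_lt_top
  have hcomp : 𝓕 (fun x => (w x : ℂ)) = charFun μ ∘ fun ξ => -(2 * π * ξ) := by
    funext ξ
    rw [Real.fourier_real_eq_integral_exp_smul, Function.comp_apply, charFun_apply_real,
      integral_withDensity_eq_integral_toReal_smul₀ hdens hfinite]
    congr 1 with x
    rw [ENNReal.toReal_ofReal (hw x), Complex.real_smul, smul_eq_mul, mul_comm]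
    push_cast; ring_nf
  have hμ (t : ℝ) : Integrable (fun x => rexp (t * x)) μ := by
    rw [integrable_withDensity_iff_integrable_smul₀' hdens hfinite]
    simpa [ENNReal.toReal_ofReal (hw _)] using hw_int t
  rw [hcomp]
  exact fun ξ _ => (analyticOnNhd_charFun_of_integrable_exp hμ _ (mem_univ _)).comp (by fun_prop)

theorem exists_aeval_hermite_ne_zero (n : ℕ) : ∃ x : ℝ, aeval x (hermite n) ≠ 0 := by
  by_contra! h
  refine ((hermite_monic n).map (Int.castRingHom ℝ)).ne_zero (zero_of_eval_zero _ fun x => ?_)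
  simpa [aeval_def, eval₂_eq_eval_map] using h x

/-- Let `g(x) = H_n(x)² e^{−x²}` with `H_n` the probabilists'
Hermite polynomial. Then the zero set of `𝓕g` has no accumulation point in
`ℝ`; in particular all zeros of `𝓕g` are isolated and the zero set has
Lebesgue measure zero. -/
theorem hermite_squared_fourier_zeros_isolated
    (n : ℕ) (g : ℝ → ℂ)
    (hg : ∀ x : ℝ,
      g x = (((aeval x (hermite n) : ℝ) ^ 2 * Real.exp (-x ^ 2) : ℝ) : ℂ)) :
    (∀ ξ : ℝ, ¬ AccPt ξ (Filter.principal {ξ' : ℝ | 𝓕 g ξ' = 0})) ∧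
    volume {ξ : ℝ | 𝓕 g ξ = 0} = 0 := by
  set w : ℝ → ℝ := fun x => aeval x (hermite n ^ 2) * rexp (-1 * x ^ 2)
  obtain rfl : g = fun x => (w x : ℂ) := funext fun x => by simp [hg, w]
  have hw : 0 ≤ w := fun x => by simp only [w, map_pow]; positivity
  have hanalytic : AnalyticOnNhd ℝ (𝓕 fun x => (w x : ℂ)) univ :=
    analyticOnNhd_fourier_ofReal_of_integrable_exp hw
      (integrable_aeval_mul_exp_neg_mul_sq_mul_exp_mul (hermite n ^ 2) one_pos)
  have h0 : 𝓕 (fun x => (w x : ℂ)) 0 ≠ 0 := by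
    obtain ⟨x, hx⟩ := exists_aeval_hermite_ne_zero n
    have hpos : 0 < ∫ x, w x := integral_pos_of_integrable_nonneg_nonzero (x := x) (by fun_prop)
      (integrable_aeval_mul_exp_neg_mul_sq _ one_pos) hw (by simp [w, hx])
    simpa [Real.fourier_real_eq_integral_exp_smul, integral_complex_ofReal] using hpos.ne'
  have hcodiscrete : {ξ | 𝓕 (fun x => (w x : ℂ)) ξ = 0}ᶜ ∈ codiscrete ℝ :=
    (hanalytic.eqOn_zero_or_eventually_ne_zero_of_preconnected isPreconnected_univ).resolve_left
      fun h => h0 (h (mem_univ 0))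
  refine ⟨fun ξ => by simpa using mem_codiscrete_accPt.1 hcodiscrete ξ, ?_⟩
  simpa [mem_ae_iff] using
    ae_restrict_le_codiscreteWithin (μ := volume) MeasurableSet.univ hcodiscrete
end

section
/- Let B > 0 and let v : ℝ → ℝ be continuously differentiable with v and v′ both bounded. Let φ : ℝ → 𝓢(ℝ), p ↦ φ_p, be a differentiable map into the Schwartz space of real-valued functions, and let ε : ℝ → ℝ be such that for all p, x ∈ ℝ: −φ_p″(x) + (B²x² + v(x − p/B)) φ_p(x) = ε(p) φ_p(x), and ∫_ℝ φ_p(x)² dx = 1 for all p. Then ε is differentiable and for every p ∈ ℝ its derivative is ε′(p) = −(1/B) ∫_ℝ v′(x − p/B) φ_p(x)² dx. -/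
/-!
Pairing the eigenvalue equations at `q` and at `p` with the other eigenfunction and using the
symmetry of `-d²/dx²` on Schwartz functions gives
`(ε q - ε p) ⟨φ_q, φ_p⟩ = ⟨(V_q - V_p) φ_q, φ_p⟩`, where `V_q x = B²x² + v (x - q/B)`; the
harmonic term cancels. After division by `q - p`, the difference quotients of the potential are
bounded (by `sup |v'| / |B|`) and converge pointwise to `∂_q V`, while `φ_q → φ_p` uniformly
because differentiability in `𝓢(ℝ)` implies continuity. Dominated convergence then sends both
`⟨φ_q, φ_p⟩` to `1` and the right-hand side to `∫ ∂_p V φ_p²`.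
-/
open MeasureTheory SchwartzMap

/-- Differentiability of a curve in the Schwartz space `𝓢(ℝ, ℝ)`: the
difference quotients converge to `φ'` in the Schwartz topology. -/
def HasSchwartzDerivAt (φ : ℝ → SchwartzMap ℝ ℝ) (φ' : SchwartzMap ℝ ℝ)
    (p : ℝ) : Prop :=
  Filter.Tendsto (fun h : ℝ => h⁻¹ • (φ (p + h) - φ p))
    (nhdsWithin (0 : ℝ) {(0 : ℝ)}ᶜ) (nhds φ')

open Filter Topology BoundedContinuousFunction

theorem HasSchwartzDerivAt.continuousAt {φ : ℝ → 𝓢(ℝ, ℝ)} {ψ : 𝓢(ℝ, ℝ)} {p : ℝ}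
    (h : HasSchwartzDerivAt φ ψ p) : ContinuousAt φ p := by
  have hΔ : Tendsto (fun t : ℝ => t • (t⁻¹ • (φ (p + t) - φ p))) (𝓝[≠] 0) (𝓝 ((0 : ℝ) • ψ)) :=
    (tendsto_id.mono_left nhdsWithin_le_nhds).smul h
  rw [zero_smul] at hΔ
  have hshift : Tendsto (fun t => φ (p + t)) (𝓝[≠] 0) (𝓝 (φ p)) := by
    refine (zero_add (φ p) ▸ hΔ.add_const (φ p)).congr' ?_
    filter_upwards [self_mem_nhdsWithin] with t ht
    rw [smul_smul, mul_inv_cancel₀ ht, one_smul, sub_add_cancel]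
  have hnhds : 𝓝[≠] p = map (p + ·) (𝓝[≠] 0) := by simp
  rw [← continuousWithinAt_compl_self, ContinuousWithinAt, hnhds, tendsto_map'_iff]
  exact hshift

theorem tendsto_integral_mul_mul_of_tendsto {X ι : Type*} [TopologicalSpace X] [MeasurableSpace X]
    [OpensMeasurableSpace X] {μ : Measure X} {l : Filter ι} [l.IsCountablyGenerated]
    {D : ι → X → ℝ} {D₀ : X → ℝ} {f : ι → X →ᵇ ℝ} {f₀ : X →ᵇ ℝ} {g : X → ℝ} {C : ℝ}
    (hg : Integrable g μ) (hf : Tendsto f l (𝓝 f₀))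
    (hDm : ∀ᶠ i in l, AEStronglyMeasurable (D i) μ) (hDb : ∀ᶠ i in l, ∀ x, |D i x| ≤ C)
    (hD : ∀ x, Tendsto (D · x) l (𝓝 (D₀ x))) :
    Tendsto (fun i => ∫ x, D i x * (f i x * g x) ∂μ) l (𝓝 (∫ x, D₀ x * (f₀ x * g x) ∂μ)) := by
  have hfb : ∀ᶠ i in l, ‖f i‖ ≤ ‖f₀‖ + 1 :=
    hf.norm.eventually (gt_mem_nhds (lt_add_one _)) |>.mono fun _ => le_of_lt
  refine tendsto_integral_filter_of_dominated_convergence (fun x => C * ((‖f₀‖ + 1) * |g x|))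
    ?_ ?_ ((hg.abs.const_mul _).const_mul _) (ae_of_all _ fun x => ?_)
  · filter_upwards [hDm] with i hi
    exact hi.mul ((f i).continuous.aestronglyMeasurable.mul hg.1)
  · filter_upwards [hDb, hfb] with i hi hfi
    refine ae_of_all _ fun x => ?_
    rw [Real.norm_eq_abs, abs_mul, abs_mul]
    have hC : 0 ≤ C := (abs_nonneg _).trans (hi x)
    gcongr
    · exact hi x
    · exact ((f i).norm_coe_le_norm x).trans hfi
  · exact (hD x).mul ((((continuous_eval_const x).tendsto f₀).comp hf).mul_const (g x))

theorem SchwartzMap.integrable_mul (f g : 𝓢(ℝ, ℝ)) : Integrable (fun x => f x * g x) :=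
  (pairing (ContinuousLinearMap.mul ℝ ℝ) f g).integrable

theorem SchwartzMap.integral_deriv_deriv_mul (f g : 𝓢(ℝ, ℝ)) :
    ∫ x, deriv (deriv f) x * g x = ∫ x, f x * deriv (deriv g) x := by
  have hf := integral_mul_deriv_eq_neg_deriv_mul g (derivCLM ℝ ℝ f)
  have hg := integral_mul_deriv_eq_neg_deriv_mul f (derivCLM ℝ ℝ g)
  simp only [derivCLM_apply] at hf hg
  calc ∫ x, deriv (deriv f) x * g x = ∫ x, g x * deriv (deriv f) x := by simp_rw [mul_comm]
    _ = -∫ x, deriv g x * deriv f x := hf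
    _ = -∫ x, deriv f x * deriv g x := by simp_rw [mul_comm]
    _ = ∫ x, f x * deriv (deriv g) x := hg.symm

theorem SchwartzMap.sub_mul_integral_mul_eq_of_eigen {f g : 𝓢(ℝ, ℝ)} {U W : ℝ → ℝ} {a b : ℝ}
    (hf : ∀ x, -deriv (deriv f) x + U x * f x = a * f x)
    (hg : ∀ x, -deriv (deriv g) x + W x * g x = b * g x) :
    (a - b) * ∫ x, f x * g x = ∫ x, (U x - W x) * (f x * g x) := by
  have hpt : ∀ x, (U x - W x) * (f x * g x)
      = (a - b) * (f x * g x) + (deriv (deriv f) x * g x - f x * deriv (deriv g) x) := fun x => by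
    linear_combination g x * hf x - f x * hg x
  have hf'' : Integrable fun x => deriv (deriv f) x * g x :=
    integrable_mul (derivCLM ℝ ℝ (derivCLM ℝ ℝ f)) g
  have hg'' : Integrable fun x => f x * deriv (deriv g) x :=
    integrable_mul f (derivCLM ℝ ℝ (derivCLM ℝ ℝ g))
  have hdiff : Integrable fun x => deriv (deriv f) x * g x - f x * deriv (deriv g) x :=
    hf''.sub hg''
  simp_rw [hpt]
  rw [integral_add ((integrable_mul f g).const_mul _) hdiff, integral_sub hf'' hg'',
    integral_const_mul, integral_deriv_deriv_mul, sub_self, add_zero]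

theorem abs_slope_le_of_abs_deriv_le {f f' : ℝ → ℝ} {C : ℝ} (hf : ∀ x, HasDerivAt f (f' x) x)
    (hf' : ∀ x, |f' x| ≤ C) (a b : ℝ) : |slope f a b| ≤ C := by
  rcases eq_or_ne b a with rfl | hba
  · simpa using (abs_nonneg _).trans (hf' b)
  have hmvt := convex_univ.norm_image_sub_le_of_norm_hasDerivWithin_le
    (fun x _ => (hf x).hasDerivWithinAt) (fun x _ => hf' x) (Set.mem_univ a) (Set.mem_univ b)
  rw [slope_def_field, abs_div, div_le_iff₀ (abs_pos.mpr (sub_ne_zero.mpr hba))]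
  simpa only [Real.norm_eq_abs] using hmvt

theorem SchwartzMap.hasDerivAt_eigenvalue_of_continuousAt {V V' : ℝ → ℝ → ℝ} {C : ℝ}
    {φ : ℝ → 𝓢(ℝ, ℝ)} {ε : ℝ → ℝ} {p : ℝ} (hV : ∀ q x, HasDerivAt (V · x) (V' q x) q)
    (hV'b : ∀ q x, |V' q x| ≤ C) (hVm : ∀ q, AEStronglyMeasurable (V q))
    (heigen : ∀ q x, -deriv (deriv (φ q)) x + V q x * φ q x = ε q * φ q x)
    (hφ : ContinuousAt φ p) (hnorm : ∫ x, φ p x ^ 2 = 1) :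
    HasDerivAt ε (∫ x, V' p x * φ p x ^ 2) p := by
  set c : ℝ → ℝ := fun q => ∫ x, φ q x * φ p x
  set N : ℝ → ℝ := fun q => ∫ x, slope (V · x) p q * (φ q x * φ p x)
  have hslope : ∀ q, slope ε p q * c q = N q := fun q => by
    simp only [c, N, slope_def_module, smul_eq_mul, mul_assoc, integral_const_mul]
    rw [sub_mul_integral_mul_eq_of_eigen (heigen q) (heigen p)]
  have hbcf : Tendsto (fun q => toBoundedContinuousFunctionCLM ℝ ℝ ℝ (φ q)) (𝓝[≠] p)
      (𝓝 (toBoundedContinuousFunctionCLM ℝ ℝ ℝ (φ p))) :=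
    ((toBoundedContinuousFunctionCLM ℝ ℝ ℝ).continuous.continuousAt.comp hφ).mono_left
      nhdsWithin_le_nhds
  have hc : Tendsto c (𝓝[≠] p) (𝓝 1) := by
    have := tendsto_integral_mul_mul_of_tendsto (D := fun _ _ => 1) (D₀ := fun _ => 1) (C := 1)
      ((φ p).integrable (μ := volume)) hbcf (.of_forall fun _ => aestronglyMeasurable_const)
      (.of_forall fun _ _ => by simp) fun _ => tendsto_const_nhds
    simpa only [one_mul, toBoundedContinuousFunctionCLM_apply, ← sq, hnorm] using this
  have hN : Tendsto N (𝓝[≠] p) (𝓝 (∫ x, V' p x * (φ p x * φ p x))) := by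
    have := tendsto_integral_mul_mul_of_tendsto (D := fun q x => slope (V · x) p q)
      ((φ p).integrable (μ := volume)) hbcf (.of_forall fun q => ?_)
      (.of_forall fun q x => abs_slope_le_of_abs_deriv_le (hV · x) (hV'b · x) p q)
      fun x => hasDerivAt_iff_tendsto_slope.mp (hV p x)
    · simpa using this
    · simp only [slope_def_module, smul_eq_mul]
      exact ((hVm q).sub (hVm p)).const_mul _
  have hcne : ∀ᶠ q in 𝓝[≠] p, c q ≠ 0 := hc.eventually_ne one_ne_zero
  rw [hasDerivAt_iff_tendsto_slope]
  refine ((hN.div hc one_ne_zero).congr' ?_).trans_eq (by simp [sq])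
  filter_upwards [hcne] with q hq
  rw [Pi.div_apply, ← hslope, mul_div_cancel_right₀ _ hq]

theorem feynman_hellmann_momentum_general
    (B : ℝ)
    (v : ℝ → ℝ) (hv : ContDiff ℝ 1 v)
    (hv'b : ∃ C : ℝ, ∀ x, |deriv v x| ≤ C)
    (φ : ℝ → SchwartzMap ℝ ℝ)
    (hφdiff : ∀ p : ℝ, ∃ ψ : SchwartzMap ℝ ℝ, HasSchwartzDerivAt φ ψ p)
    (ε : ℝ → ℝ)
    (heigen : ∀ p x : ℝ,
      -(deriv (deriv (φ p)) x) + (B ^ 2 * x ^ 2 + v (x - p / B)) * φ p x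
        = ε p * φ p x)
    (hnorm : ∀ p : ℝ, (∫ x : ℝ, (φ p x) ^ 2) = 1) :
    ∀ p : ℝ,
      HasDerivAt ε (-(1 / B) * ∫ x : ℝ, deriv v (x - p / B) * (φ p x) ^ 2) p := by
  intro p
  obtain ⟨C, hC⟩ := hv'b
  obtain ⟨ψ, hψ⟩ := hφdiff p
  have hvd : Differentiable ℝ v := hv.differentiable one_ne_zero
  have hV : ∀ q x, HasDerivAt (fun q => B ^ 2 * x ^ 2 + v (x - q / B))
      (-(1 / B) * deriv v (x - q / B)) q := fun q x => by
    refine (((hvd _).hasDerivAt.comp q (((hasDerivAt_id' q).div_const B).const_sub x)).const_add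
      (B ^ 2 * x ^ 2)).congr_deriv ?_
    ring
  have hV'b : ∀ q x, |-(1 / B) * deriv v (x - q / B)| ≤ |1 / B| * C := fun q x => by
    rw [abs_mul, abs_neg]
    exact mul_le_mul_of_nonneg_left (hC _) (abs_nonneg _)
  have hVm : ∀ q, AEStronglyMeasurable fun x : ℝ => B ^ 2 * x ^ 2 + v (x - q / B) := fun q => by
    have hvc := hv.continuous
    exact Continuous.aestronglyMeasurable (by fun_prop)
  simpa only [mul_assoc, integral_const_mul] using
    SchwartzMap.hasDerivAt_eigenvalue_of_continuousAt hV hV'b hVm heigen hψ.continuousAt (hnorm p)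

/-- Feynman–Hellmann formula in the momentum variable: with
`B > 0`, `v ∈ C¹` with `v, v'` bounded, a differentiable family
`p ↦ φ_p ∈ 𝓢(ℝ)` of normalized real eigenfunctions of
`−d²/dx² + B²x² + v(x − p/B)` with eigenvalue `ε(p)`, the dispersion curve is
differentiable with `ε'(p) = −(1/B) ∫ v'(x − p/B) φ_p(x)² dx`. -/
theorem feynman_hellmann_momentum
    (B : ℝ) (hB : 0 < B)
    (v : ℝ → ℝ) (hv : ContDiff ℝ 1 v)
    (hvb : ∃ C : ℝ, ∀ x, |v x| ≤ C)
    (hv'b : ∃ C : ℝ, ∀ x, |deriv v x| ≤ C)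
    (φ : ℝ → SchwartzMap ℝ ℝ)
    (hφdiff : ∀ p : ℝ, ∃ ψ : SchwartzMap ℝ ℝ, HasSchwartzDerivAt φ ψ p)
    (ε : ℝ → ℝ)
    (heigen : ∀ p x : ℝ,
      -(deriv (deriv (φ p)) x) + (B ^ 2 * x ^ 2 + v (x - p / B)) * φ p x
        = ε p * φ p x)
    (hnorm : ∀ p : ℝ, (∫ x : ℝ, (φ p x) ^ 2) = 1) :
    ∀ p : ℝ,
      HasDerivAt ε (-(1 / B) * ∫ x : ℝ, deriv v (x - p / B) * (φ p x) ^ 2) p :=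
  feynman_hellmann_momentum_general B v hv hv'b φ hφdiff ε heigen hnorm
end
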